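/- Consider differentiable trajectories w_{1,i} : [0,∞) → ℝ^d and w_{2,i} : [0,∞) → ℝ (i = 1,…,m) satisfying the subgradient flow equations of the logistic loss at every t ≥ 0, namely d/dt w_{1,i}(t) = w_{2,i}(t) · Σ_{n : x_nᵀw_{1,i}(t) > 0} λ̃_n(t) x_n and d/dt w_{2,i}(t) = Σ_{n=1}^N λ̃_n(t) (x_nᵀw_{1,i}(t))_+. If ‖w_{1,i}(0)‖₂ = |w_{2,i}(0)| > 0 for every i ∈ {1,…,m}, then for every t ≥ 0 and every i, ‖w_{1,i}(t)‖₂ = |w_{2,i}(t)| > 0; in particular the sign of w_{2,i}(t) equals the sign of w_{2,i}(0) for all t ≥ 0. -/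

import Mathlib

/-!
Since the ReLU is positively homogeneous, `⟪w₁ᵢ, w₁ᵢ'⟫ = w₂ᵢ w₂ᵢ'` along the flow, so the balance
`‖w₁ᵢ‖² − w₂ᵢ²` is conserved and `‖w₁ᵢ(t)‖ = |w₂ᵢ(t)|` for all `t ≥ 0`. As `|λ̃ₙ| ≤ |yₙ|`, this
gives `|w₂ᵢ'| ≤ C ‖w₁ᵢ‖ = C |w₂ᵢ|` with `C = Σₙ |yₙ| ‖xₙ‖`, hence `w₂ᵢ(t)² e^{2Ct}` is
nondecreasing and `w₂ᵢ` never vanishes; by the intermediate value theorem its sign is constant.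
-/

open scoped BigOperators

noncomputable section

/-- Derivative of the logistic loss `ℓ(q) = log(1 + exp(−q))`: `ℓ'(q) = −1/(1 + exp q)`. -/
def logisticDeriv (q : ℝ) : ℝ := -(1 + Real.exp q)⁻¹

/-- Network margin output `q_n = y_n Σ_i (x_nᵀ w_{1,i})₊ w_{2,i}`. -/
def qOut {N d m : ℕ} (x : Fin N → EuclideanSpace ℝ (Fin d)) (y : Fin N → ℝ)
    (w1 : Fin m → EuclideanSpace ℝ (Fin d)) (w2 : Fin m → ℝ) (n : Fin N) : ℝ :=
  y n * ∑ i, max (inner ℝ (x n) (w1 i) : ℝ) 0 * w2 i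

/-- `λ̃_n = −y_n ℓ'(q_n)`. -/
def lamTilde {N d m : ℕ} (x : Fin N → EuclideanSpace ℝ (Fin d)) (y : Fin N → ℝ)
    (w1 : Fin m → EuclideanSpace ℝ (Fin d)) (w2 : Fin m → ℝ) (n : Fin N) : ℝ :=
  -(y n) * logisticDeriv (qOut x y w1 w2 n)

open Real Set Finset

section Flow

variable {E : Type*} [NormedAddCommGroup E] [InnerProductSpace ℝ E]

theorem norm_eq_abs_of_hasDerivAt_smul_inner {u v : ℝ → E} {a : ℝ → ℝ}
    (hu : ∀ t, 0 ≤ t → HasDerivAt u (a t • v t) t)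
    (ha : ∀ t, 0 ≤ t → HasDerivAt a (inner ℝ (v t) (u t)) t)
    (h₀ : ‖u 0‖ = |a 0|) {t : ℝ} (ht : 0 ≤ t) : ‖u t‖ = |a t| := by
  have hderiv : ∀ s, 0 ≤ s → HasDerivAt (fun s => ‖u s‖ ^ 2 - a s ^ 2) 0 s := by
    intro s hs
    refine ((hu s hs).norm_sq.sub ((ha s hs).pow 2)).congr_deriv ?_
    rw [real_inner_smul_right, real_inner_comm]
    ring
  have hconst := constant_of_has_deriv_right_zero (a := 0) (b := t)
    (fun s hs => (hderiv s hs.1).continuousAt.continuousWithinAt)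
    (fun s hs => (hderiv s hs.1).hasDerivWithinAt) t ⟨ht, le_rfl⟩
  rw [h₀, sq_abs, sub_self, sub_eq_zero, ← sq_abs (a t)] at hconst
  exact (sq_eq_sq₀ (norm_nonneg _) (abs_nonneg _)).1 hconst

end Flow

theorem sq_le_sq_mul_exp_of_abs_deriv_le {a a' : ℝ → ℝ} {C : ℝ}
    (ha : ∀ t, 0 ≤ t → HasDerivAt a (a' t) t) (hbound : ∀ t, 0 ≤ t → |a' t| ≤ C * |a t|)
    {t : ℝ} (ht : 0 ≤ t) : a 0 ^ 2 ≤ a t ^ 2 * exp (2 * C * t) := by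
  have hderiv : ∀ s, 0 ≤ s → HasDerivAt (fun s => a s ^ 2 * exp (2 * C * s))
      ((2 * a s * a' s + 2 * C * a s ^ 2) * exp (2 * C * s)) s := by
    intro s hs
    refine (((ha s hs).pow 2).mul ((hasDerivAt_id' s).const_mul (2 * C)).exp).congr_deriv ?_
    simp only [Pi.pow_apply]
    ring
  have hmono : MonotoneOn (fun s => a s ^ 2 * exp (2 * C * s)) (Ici 0) := by
    refine monotoneOn_of_hasDerivWithinAt_nonneg (convex_Ici 0)
      (fun s hs => (hderiv s hs).continuousAt.continuousWithinAt)
      (fun s hs => (hderiv s (interior_subset hs)).hasDerivWithinAt) fun s hs => ?_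
    have hs : 0 ≤ s := interior_subset hs
    have hprod : -(a s * a' s) ≤ C * a s ^ 2 := calc
      -(a s * a' s) ≤ |a s| * |a' s| := by rw [← abs_mul]; exact neg_le_abs _
      _ ≤ |a s| * (C * |a s|) := mul_le_mul_of_nonneg_left (hbound s hs) (abs_nonneg _)
      _ = C * a s ^ 2 := by rw [← sq_abs (a s)]; ring
    have : 0 ≤ 2 * a s * a' s + 2 * C * a s ^ 2 := by linarith
    positivity
  simpa using hmono (mem_Ici.2 le_rfl) ht ht

theorem ne_zero_of_abs_deriv_le {a a' : ℝ → ℝ} {C : ℝ}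
    (ha : ∀ t, 0 ≤ t → HasDerivAt a (a' t) t) (hbound : ∀ t, 0 ≤ t → |a' t| ≤ C * |a t|)
    (h₀ : a 0 ≠ 0) {t : ℝ} (ht : 0 ≤ t) : a t ≠ 0 := by
  intro hzero
  have h := sq_le_sq_mul_exp_of_abs_deriv_le ha hbound ht
  rw [hzero, zero_pow two_ne_zero, zero_mul] at h
  exact (pow_two_pos_of_ne_zero h₀).not_ge h

theorem sign_eq_of_continuousOn_of_ne_zero {a : ℝ → ℝ} {s t : ℝ}
    (hcont : ContinuousOn a (uIcc s t)) (hne : ∀ u ∈ uIcc s t, a u ≠ 0) :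
    Real.sign (a t) = Real.sign (a s) := by
  have h0 : (0 : ℝ) ∉ uIcc (a s) (a t) := fun h0 => by
    obtain ⟨u, hu, hau⟩ := intermediate_value_uIcc hcont h0
    exact hne u hu hau
  rcases (hne s left_mem_uIcc).lt_or_gt with hs | hs
  · have ht : a t < 0 := not_le.1 fun ht => h0 (Set.mem_uIcc.2 (Or.inl ⟨hs.le, ht⟩))
    rw [Real.sign_of_neg hs, Real.sign_of_neg ht]
  · have ht : 0 < a t := not_le.1 fun ht => h0 (Set.mem_uIcc.2 (Or.inr ⟨ht, hs.le⟩))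
    rw [Real.sign_of_pos hs, Real.sign_of_pos ht]

theorem abs_lamTilde_le {N d m : ℕ} (x : Fin N → EuclideanSpace ℝ (Fin d)) (y : Fin N → ℝ)
    (w1 : Fin m → EuclideanSpace ℝ (Fin d)) (w2 : Fin m → ℝ) (n : Fin N) :
    |lamTilde x y w1 w2 n| ≤ |y n| := by
  have hpos : 0 < 1 + exp (qOut x y w1 w2 n) := by positivity
  rw [lamTilde, logisticDeriv, abs_mul, abs_neg, abs_neg, abs_inv, abs_of_pos hpos]
  exact mul_le_of_le_one_right (abs_nonneg _)
    (inv_le_one_of_one_le₀ (le_add_of_nonneg_right (exp_pos _).le))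

section ReLU

variable {ι E : Type*} [Fintype ι] [NormedAddCommGroup E] [InnerProductSpace ℝ E]

theorem sum_mul_max_inner_eq_inner_sum_filter (c : ι → ℝ) (x : ι → E) (w : E) :
    ∑ n, c n * max (inner ℝ (x n) w) 0 =
      inner ℝ (∑ n ∈ univ.filter (fun n => 0 < inner ℝ (x n) w), c n • x n) w := by
  rw [sum_inner, sum_filter]
  refine sum_congr rfl fun n _ => ?_
  split_ifs with h
  · rw [max_eq_left h.le, real_inner_smul_left]
  · rw [max_eq_right (not_lt.1 h), mul_zero]

theorem abs_sum_mul_max_inner_le {c b : ι → ℝ} (hcb : ∀ n, |c n| ≤ b n) (x : ι → E) (w : E) :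
    |∑ n, c n * max (inner ℝ (x n) w) 0| ≤ (∑ n, b n * ‖x n‖) * ‖w‖ := by
  rw [sum_mul]
  refine (abs_sum_le_sum_abs _ _).trans (sum_le_sum fun n _ => ?_)
  have hrelu : |max (inner ℝ (x n) w) 0| ≤ ‖x n‖ * ‖w‖ := by
    rw [abs_of_nonneg (le_max_right _ _)]
    exact max_le (real_inner_le_norm _ _) (by positivity)
  rw [abs_mul, mul_assoc]
  exact mul_le_mul (hcb n) hrelu (abs_nonneg _) ((abs_nonneg _).trans (hcb n))

end ReLU

theorem scaled_initialization_preserved_general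
    {N d m : ℕ}
    (x : Fin N → EuclideanSpace ℝ (Fin d)) (y : Fin N → ℝ)
    (w1 : Fin m → ℝ → EuclideanSpace ℝ (Fin d)) (w2 : Fin m → ℝ → ℝ)
    (hflow1 : ∀ i, ∀ t, 0 ≤ t → HasDerivAt (w1 i)
      (w2 i t • ∑ n ∈ Finset.univ.filter (fun n => 0 < (inner ℝ (x n) (w1 i t) : ℝ)),
        lamTilde x y (fun j => w1 j t) (fun j => w2 j t) n • x n) t)
    (hflow2 : ∀ i, ∀ t, 0 ≤ t → HasDerivAt (w2 i)
      (∑ n, lamTilde x y (fun j => w1 j t) (fun j => w2 j t) n *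
        max (inner ℝ (x n) (w1 i t) : ℝ) 0) t)
    (hinit : ∀ i, ‖w1 i 0‖ = |w2 i 0| ∧ 0 < |w2 i 0|) :
    ∀ t, 0 ≤ t → ∀ i,
      (‖w1 i t‖ = |w2 i t| ∧ 0 < |w2 i t|) ∧
      Real.sign (w2 i t) = Real.sign (w2 i 0) := by
  intro t ht i
  have hbalanced : ∀ s, 0 ≤ s → ‖w1 i s‖ = |w2 i s| :=
    fun s hs => norm_eq_abs_of_hasDerivAt_smul_inner (hflow1 i)
      (fun s hs => sum_mul_max_inner_eq_inner_sum_filter _ x (w1 i s) ▸ hflow2 i s hs)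
      (hinit i).1 hs
  have hgrowth : ∀ s, 0 ≤ s →
      |∑ n, lamTilde x y (fun j => w1 j s) (fun j => w2 j s) n * max (inner ℝ (x n) (w1 i s)) 0|
        ≤ (∑ n, |y n| * ‖x n‖) * |w2 i s| :=
    fun s hs => hbalanced s hs ▸ abs_sum_mul_max_inner_le (fun n => abs_lamTilde_le ..) x _
  have hne : ∀ s, 0 ≤ s → w2 i s ≠ 0 :=
    fun s hs => ne_zero_of_abs_deriv_le (hflow2 i) hgrowth (abs_pos.1 (hinit i).2) hs
  refine ⟨⟨hbalanced t ht, abs_pos.2 (hne t ht)⟩, sign_eq_of_continuousOn_of_ne_zero ?_ ?_⟩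
  · rw [uIcc_of_le ht]
    exact fun s hs => (hflow2 i s hs.1).continuousAt.continuousWithinAt
  · rw [uIcc_of_le ht]
    exact fun s hs => hne s hs.1

/-- Lemma `lem:sign`: along the subgradient flow of the logistic loss, a
scaled initialization `‖w₁ᵢ(0)‖ = |w₂ᵢ(0)| > 0` stays scaled and nonvanishing for all
`t ≥ 0`; in particular the sign of `w₂ᵢ(t)` is constant. -/
theorem scaled_initialization_preserved
    {N d m : ℕ}
    (x : Fin N → EuclideanSpace ℝ (Fin d)) (y : Fin N → ℝ)
    (hy : ∀ n, y n = 1 ∨ y n = -1)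
    (w1 : Fin m → ℝ → EuclideanSpace ℝ (Fin d)) (w2 : Fin m → ℝ → ℝ)
    (hflow1 : ∀ i, ∀ t, 0 ≤ t → HasDerivAt (w1 i)
      (w2 i t • ∑ n ∈ Finset.univ.filter (fun n => 0 < (inner ℝ (x n) (w1 i t) : ℝ)),
        lamTilde x y (fun j => w1 j t) (fun j => w2 j t) n • x n) t)
    (hflow2 : ∀ i, ∀ t, 0 ≤ t → HasDerivAt (w2 i)
      (∑ n, lamTilde x y (fun j => w1 j t) (fun j => w2 j t) n *
        max (inner ℝ (x n) (w1 i t) : ℝ) 0) t)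
    (hinit : ∀ i, ‖w1 i 0‖ = |w2 i 0| ∧ 0 < |w2 i 0|) :
    ∀ t, 0 ≤ t → ∀ i,
      (‖w1 i t‖ = |w2 i t| ∧ 0 < |w2 i t|) ∧
      Real.sign (w2 i t) = Real.sign (w2 i 0) :=
  scaled_initialization_preserved_general x y w1 w2 hflow1 hflow2 hinit
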